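/- The matrix FV⁻¹ (with F and V as in the SIHUR next-generation construction) has rank at most 1, and its eigenvalues are R₀ (with the above formula) and 0 with multiplicity 2. -/

import Mathlib

/-!
Only the first row of `F` is nonzero, so `F V⁻¹ = e₀ ⊗ r` with `r = β (1, q, m) V⁻¹`: a rank-one
matrix which is upper triangular with diagonal `(r₀, 0, 0)`. Solving the lower-triangular system
`V x = e₀` gives `x = (1/k₁, γ₁/(k₁k₂), (γ₁τ + γ₂k₂)/(k₁k₂k₃))`, and `r₀ = β (1, q, m) · x = R₀`.
-/

open Polynomial Matrix

theorem Matrix.charpoly_vecMulVec_single_zero {R : Type*} [CommRing R] {n : ℕ}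
    (v : Fin (n + 1) → R) :
    (vecMulVec (Pi.single 0 1) v).charpoly = X ^ n * (X - C (v 0)) := by
  have hupper : (vecMulVec (Pi.single 0 1) v).IsUpperTriangular := by
    intro i j hji
    have hi : i ≠ 0 := ((Fin.zero_le j).trans_lt hji).ne'
    simp [vecMulVec_apply, hi]
  rw [charpoly_of_isUpperTriangular _ hupper, Fin.prod_univ_succ]
  simp [vecMulVec_apply, Fin.succ_ne_zero, mul_comm]

theorem sihur_next_generation_matrix_eq (β q m γ₁ γ₂ τ k₁ k₂ k₃ : ℝ)
    (hk₁ : k₁ ≠ 0) (hk₂ : k₂ ≠ 0) (hk₃ : k₃ ≠ 0) :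
    β • !![(1:ℝ), q, m; 0, 0, 0; 0, 0, 0] * (!![k₁, 0, 0; -γ₁, k₂, 0; -γ₂, -τ, k₃])⁻¹ =
      vecMulVec (Pi.single 0 1)
        ![(β / k₁) * (1 + q * γ₁ / k₂ + m * (γ₁ * τ + γ₂ * k₂) / (k₂ * k₃)),
          β * (q / k₂ + m * τ / (k₂ * k₃)), β * m / k₃] := by
  have : Invertible !![k₁, 0, 0; -γ₁, k₂, 0; -γ₂, -τ, k₃] := by
    refine invertibleOfIsUnitDet _ (IsUnit.mk0 _ ?_)
    simp [det_fin_three, hk₁, hk₂, hk₃]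
  rw [mul_inv_eq_iff_eq_mul_of_invertible]
  ext i j
  fin_cases i <;> fin_cases j <;> simp [mul_apply, Fin.sum_univ_three] <;>
    field_simp <;> ring

theorem next_generation_rank_and_eigenvalues_general (β q m γ₁ γ₂ τ k₁ k₂ k₃ : ℝ)
    (hk₁ : 0 < k₁) (hk₂ : 0 < k₂) (hk₃ : 0 < k₃)
    (F V : Matrix (Fin 3) (Fin 3) ℝ)
    (hF : F = β • !![(1:ℝ), q, m; 0, 0, 0; 0, 0, 0])
    (hV : V = !![k₁, 0, 0; -γ₁, k₂, 0; -γ₂, -τ, k₃])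
    (R₀ : ℝ)
    (hR₀ : R₀ = (β / k₁) * (1 + q * γ₁ / k₂ + m * (γ₁ * τ + γ₂ * k₂) / (k₂ * k₃))) :
    (F * V⁻¹).rank ≤ 1 ∧
      (F * V⁻¹).charpoly = X ^ 2 * (X - C R₀) := by
  rw [hF, hV, sihur_next_generation_matrix_eq β q m γ₁ γ₂ τ k₁ k₂ k₃ hk₁.ne' hk₂.ne' hk₃.ne', ← hR₀]
  exact ⟨rank_vecMulVec_le _ _, charpoly_vecMulVec_single_zero _⟩

theorem next_generation_rank_and_eigenvalues (β q m γ₁ γ₂ τ k₁ k₂ k₃ : ℝ)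
    (hβ : 0 ≤ β) (hq : 0 ≤ q) (hm : 0 ≤ m)
    (hγ₁ : 0 ≤ γ₁) (hγ₂ : 0 ≤ γ₂) (hτ : 0 ≤ τ)
    (hk₁ : 0 < k₁) (hk₂ : 0 < k₂) (hk₃ : 0 < k₃)
    (F V : Matrix (Fin 3) (Fin 3) ℝ)
    (hF : F = β • !![(1:ℝ), q, m; 0, 0, 0; 0, 0, 0])
    (hV : V = !![k₁, 0, 0; -γ₁, k₂, 0; -γ₂, -τ, k₃])
    (R₀ : ℝ)
    (hR₀ : R₀ = (β / k₁) * (1 + q * γ₁ / k₂ + m * (γ₁ * τ + γ₂ * k₂) / (k₂ * k₃))) :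
    (F * V⁻¹).rank ≤ 1 ∧
      (F * V⁻¹).charpoly = X ^ 2 * (X - C R₀) :=
  next_generation_rank_and_eigenvalues_general β q m γ₁ γ₂ τ k₁ k₂ k₃ hk₁ hk₂ hk₃ F V hF hV R₀ hR₀
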